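/- arXiv:1004.3527 — 3 statements merged into one kernel-verified Lean document; each statement's English description precedes it below -/
import Mathlib

section
/- If X ~ Binomial(d, p) with d ≥ 1 and 0 < p < 1, and a is a Bernoulli(p) random variable such that X can be written as a + Y with Y ~ Binomial(d-1, p) independent of a, then E[a/(X+1)] = (1 - M)/d, where M = (1 - (1-p)^(d+1))/(p(d+1)). -/
/-!
Since `X = a + Y` is a sum of `d` exchangeable Bernoulli(p) variables,
`d E[a/(X+1)] = E[X/(X+1)] = 1 - E[1/(X+1)]`, and `E[1/(X+1)] = M`. Both steps rest on the
absorption identity `(k+1) C(n+1,k+1) = (n+1) C(n,k)`, which on binomial sums reads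
`E[X f(X)] = d p E[f(Y+1)]`.
-/

open Finset

section BinomialTerm

variable {R : Type*} [CommSemiring R]

def binomialTerm (n : ℕ) (p q : R) (k : ℕ) : R := n.choose k * p ^ k * q ^ (n - k)

theorem sum_binomialTerm (n : ℕ) (p q : R) :
    ∑ k ∈ range (n + 1), binomialTerm n p q k = (p + q) ^ n := by
  rw [add_pow]
  exact sum_congr rfl fun k _ => by rw [binomialTerm]; ring

theorem binomialTerm_succ_succ (n : ℕ) (p q : R) (k : ℕ) :
    ((k : R) + 1) * binomialTerm (n + 1) p q (k + 1) = (n + 1) * p * binomialTerm n p q k := by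
  have hchoose : (((n + 1) * n.choose k : ℕ) : R) = ((n + 1).choose (k + 1) * (k + 1) : ℕ) :=
    congrArg _ (Nat.add_one_mul_choose_eq n k)
  push_cast at hchoose
  calc ((k : R) + 1) * binomialTerm (n + 1) p q (k + 1)
      = ((n + 1).choose (k + 1) * (k + 1) : R) * (p * p ^ k * q ^ (n - k)) := by
        rw [binomialTerm, Nat.add_sub_add_right, pow_succ']
        ring
    _ = (n + 1) * p * binomialTerm n p q k := by
        rw [← hchoose, binomialTerm]
        ring

theorem sum_natCast_mul_binomialTerm (n : ℕ) (p q : R) (f : ℕ → R) :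
    ∑ j ∈ range (n + 2), (j : R) * f j * binomialTerm (n + 1) p q j
      = (n + 1) * p * ∑ k ∈ range (n + 1), f (k + 1) * binomialTerm n p q k := by
  rw [sum_range_succ', mul_sum]
  simp only [Nat.cast_zero, zero_mul, add_zero]
  refine sum_congr rfl fun k _ => ?_
  rw [mul_left_comm, ← binomialTerm_succ_succ]
  push_cast
  ring

end BinomialTerm

theorem mul_sum_binomialTerm_div_succ {K : Type*} [Field K] [CharZero K] (n : ℕ) (p q : K) :
    (n + 1) * p * ∑ k ∈ range (n + 1), binomialTerm n p q k / (k + 1)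
      = (p + q) ^ (n + 1) - q ^ (n + 1) := by
  have hbinom := sum_binomialTerm (n + 1) p q
  rw [sum_range_succ'] at hbinom
  simp only [binomialTerm, Nat.choose_zero_right, Nat.cast_one, pow_zero, one_mul,
    Nat.sub_zero] at hbinom
  rw [← hbinom, add_sub_cancel_right, mul_sum]
  refine sum_congr rfl fun k _ => ?_
  rw [mul_div_assoc', ← binomialTerm_succ_succ,
    mul_div_cancel_left₀ _ (Nat.cast_add_one_ne_zero k), binomialTerm]

theorem mul_sum_binomialTerm_div_add_two {K : Type*} [Field K] [CharZero K] (n : ℕ) (p q : K) :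
    (n + 1) * p * ∑ k ∈ range (n + 1), binomialTerm n p q k / (k + 2)
      = (p + q) ^ (n + 1) - ∑ j ∈ range (n + 2), binomialTerm (n + 1) p q j / (j + 1) := by
  calc (n + 1) * p * ∑ k ∈ range (n + 1), binomialTerm n p q k / (k + 2)
      = (n + 1) * p * ∑ k ∈ range (n + 1), 1 / (((k + 1 : ℕ) : K) + 1) * binomialTerm n p q k := by
        congr 1
        refine sum_congr rfl fun k _ => ?_
        push_cast
        ring
    _ = ∑ j ∈ range (n + 2), (j : K) * (1 / ((j : K) + 1)) * binomialTerm (n + 1) p q j :=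
        (sum_natCast_mul_binomialTerm n p q fun j => 1 / ((j : K) + 1)).symm
    _ = ∑ j ∈ range (n + 2), (binomialTerm (n + 1) p q j - binomialTerm (n + 1) p q j / (j + 1)) :=
        sum_congr rfl fun j _ => by field_simp; ring
    _ = (p + q) ^ (n + 1) - ∑ j ∈ range (n + 2), binomialTerm (n + 1) p q j / (j + 1) := by
        rw [sum_sub_distrib, sum_binomialTerm]

theorem bernoulli_binomial_expectation_a_div_general
    (d : ℕ) (hd : 1 ≤ d) (p q M : ℝ) (hp0 : 0 < p) (hq : q = 1 - p)
    (hM : M = (1 - q ^ (d + 1)) / (p * ((d : ℝ) + 1))) :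
    ∑ a ∈ Finset.range 2, ∑ k ∈ Finset.range d,
        ((a : ℝ) / ((a : ℝ) + (k : ℝ) + 1)) * (p ^ a * q ^ (1 - a)) *
          (((d - 1).choose k : ℝ) * p ^ k * q ^ (d - 1 - k))
      = (1 - M) / (d : ℝ) := by
  obtain ⟨n, rfl⟩ : ∃ n, d = n + 1 := ⟨d - 1, by omega⟩
  have hpq : p + q = 1 := by rw [hq]; ring
  have hlhs : ∑ a ∈ range 2, ∑ k ∈ range (n + 1),
      ((a : ℝ) / ((a : ℝ) + (k : ℝ) + 1)) * (p ^ a * q ^ (1 - a)) *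
        ((n.choose k : ℝ) * p ^ k * q ^ (n - k))
        = p * ∑ k ∈ range (n + 1), binomialTerm n p q k / (k + 2) := by
    rw [sum_range_succ, sum_range_one, mul_sum]
    simp only [Nat.cast_zero, zero_div, zero_mul, sum_const_zero, zero_add]
    refine sum_congr rfl fun k _ => ?_
    rw [binomialTerm]
    ring
  have hsize_bias := mul_sum_binomialTerm_div_add_two n p q
  have hmean := mul_sum_binomialTerm_div_succ (n + 1) p q
  rw [hpq, one_pow] at hsize_bias hmean
  rw [Nat.add_sub_cancel, hlhs, hM]
  field_simp
  push_cast at hmean ⊢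
  linear_combination (p * ((n : ℝ) + 2)) * hsize_bias - hmean

/-- If `a ~ Bernoulli(p)`, `Y ~ Binomial(d-1, p)` independent of `a`, `d ≥ 1`, and
`X = a + Y ~ Binomial(d, p)`, then `E[a/(X+1)] = (1 - M)/d` where
`M = (1 - (1-p)^(d+1))/(p(d+1))`. The expectation is written as an explicit sum over
the joint distribution of `(a, Y)`. -/
theorem bernoulli_binomial_expectation_a_div
    (d : ℕ) (hd : 1 ≤ d) (p q M : ℝ) (hp0 : 0 < p) (hp1 : p < 1) (hq : q = 1 - p)
    (hM : M = (1 - q ^ (d + 1)) / (p * ((d : ℝ) + 1))) :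
    ∑ a ∈ Finset.range 2, ∑ k ∈ Finset.range d,
        ((a : ℝ) / ((a : ℝ) + (k : ℝ) + 1)) * (p ^ a * q ^ (1 - a)) *
          (((d - 1).choose k : ℝ) * p ^ k * q ^ (d - 1 - k))
      = (1 - M) / (d : ℝ) :=
  bernoulli_binomial_expectation_a_div_general d hd p q M hp0 hq hM
end

section
/- Let {W_k} be an i.i.d. sequence of random n×n row-stochastic matrices such that the product W_k⋯W_1 converges almost surely to 1·d^T for a random probability vector d. If x(k) = W_k x(k-1) with initial state x(0), then the a.s. limit x* = d^T x(0) of every coordinate of x(k) satisfies E[x*] = x(0)^T v_1, where v_1 is the normalized left eigenvector of E[W_k] for eigenvalue 1 (assumed simple). -/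
/-!
Write `P k = W k ⋯ W 1`. Since `P (k + 1) = W (k + 1) P k` with `W (k + 1)` independent of `P k`,
induction gives `E[P k] = (E W)ᵏ`. The entries of stochastic matrices lie in `[0, 1]`, so dominated
convergence turns `P k → 1 dᵀ` into `(E W)ᵏ → 1 (E d)ᵀ`; passing to the limit in
`(E W)ᵏ⁺¹ = (E W)ᵏ E W` shows that `E d` is a left fixed vector of `E W`, and it is a probability
vector because `d` is. As the unit eigenvalue of `E W` is simple, its left eigenspace is a line,
which contains exactly one vector of coordinate sum `1`, namely `v`.
-/

open Matrix MeasureTheory ProbabilityTheory Filter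

/-- Borel measurable structure on real matrices (entrywise). -/
noncomputable instance matrixMeasurableSpace {n : ℕ} :
    MeasurableSpace (Matrix (Fin n) (Fin n) ℝ) :=
  (inferInstance : MeasurableSpace (Fin n → Fin n → ℝ))

open Topology

namespace Matrix

variable {ι : Type*} [Fintype ι] [DecidableEq ι]

theorem eq_of_vecMul_eq_self_of_rootMultiplicity_le_one {K : Type*} [Field K] {A : Matrix ι ι K}
    (hA : A.charpoly.rootMultiplicity 1 ≤ 1) {v w : ι → K} (hv : v ᵥ* A = v) (hw : w ᵥ* A = w)
    (hv1 : ∑ i, v i = 1) (hw1 : ∑ i, w i = 1) : w = v := by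
  set E := Module.End.eigenspace (toLin' Aᵀ) 1
  have mem_E : ∀ u, u ᵥ* A = u → u ∈ E := fun u hu => by
    rw [Module.End.mem_eigenspace_iff, toLin'_apply, mulVec_transpose, hu, one_smul]
  have hE : Module.finrank K E ≤ 1 :=
    calc Module.finrank K E ≤ (toLin' Aᵀ).charpoly.rootMultiplicity 1 :=
          LinearMap.finrank_eigenspace_le _ _
      _ = A.charpoly.rootMultiplicity 1 := by rw [charpoly_toLin', charpoly_transpose]
      _ ≤ 1 := hA
  obtain ⟨u, hu⟩ := finrank_le_one_iff.mp hE
  obtain ⟨a, ha⟩ := hu ⟨v, mem_E v hv⟩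
  obtain ⟨b, hb⟩ := hu ⟨w, mem_E w hw⟩
  replace ha : a • (u : ι → K) = v := congrArg Subtype.val ha
  replace hb : b • (u : ι → K) = w := congrArg Subtype.val hb
  have hab : a = b := by
    rw [← ha] at hv1
    rw [← hb] at hw1
    simp only [Pi.smul_apply, smul_eq_mul, ← Finset.mul_sum] at hv1 hw1
    exact mul_right_cancel₀ (right_ne_zero_of_mul_eq_one hv1) (hv1.trans hw1.symm)
  rw [← ha, ← hb, hab]

omit [Fintype ι] [DecidableEq ι] in
theorem tendsto_apply_of_tendsto_vecMulVec {α : Type*} [TopologicalSpace α] [MulOneClass α]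
    {l : Filter ℕ} {M : ℕ → Matrix ι ι α} {d : ι → α}
    (h : Tendsto M l (𝓝 (vecMulVec 1 d))) (i j : ι) :
    Tendsto (fun k => M k i j) l (𝓝 (d j)) := by
  simpa [vecMulVec_apply] using tendsto_pi_nhds.1 (tendsto_pi_nhds.1 h i) j

theorem norm_apply_le_one_of_mem_rowStochastic {M : Matrix ι ι ℝ} (hM : M ∈ rowStochastic ℝ ι)
    (i j : ι) : ‖M i j‖ ≤ 1 := by
  rw [Real.norm_of_nonneg (nonneg_of_mem_rowStochastic hM)]
  exact le_one_of_mem_rowStochastic hM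

theorem mem_stdSimplex_of_tendsto_vecMulVec [Nonempty ι] {M : ℕ → Matrix ι ι ℝ} {d : ι → ℝ}
    (hM : ∀ k, M k ∈ rowStochastic ℝ ι) (h : Tendsto M atTop (𝓝 (vecMulVec 1 d))) :
    d ∈ stdSimplex ℝ ι := by
  obtain ⟨i⟩ := ‹Nonempty ι›
  refine ⟨fun j => ge_of_tendsto' (tendsto_apply_of_tendsto_vecMulVec h i j)
    fun k => nonneg_of_mem_rowStochastic (hM k), ?_⟩
  exact tendsto_nhds_unique
    (tendsto_finsetSum _ fun j _ => tendsto_apply_of_tendsto_vecMulVec h i j)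
    (by simp [sum_row_of_mem_rowStochastic (hM _)])

theorem vecMul_eq_self_of_tendsto_pow {R : Type*} [CommRing R] [TopologicalSpace R]
    [IsTopologicalRing R] [T2Space R] [Nonempty ι] {A : Matrix ι ι R} {e : ι → R}
    (h : Tendsto (A ^ ·) atTop (𝓝 (vecMulVec 1 e))) : e ᵥ* A = e := by
  have hA : vecMulVec (1 : ι → R) e * A = vecMulVec 1 e := by
    refine tendsto_nhds_unique ?_ ((tendsto_add_atTop_iff_nat 1).2 h)
    simp only [pow_succ]
    exact ((continuous_id.matrix_mul continuous_const).tendsto _).comp h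
  obtain ⟨i⟩ := ‹Nonempty ι›
  rw [vecMulVec_mul] at hA
  ext j
  simpa [vecMulVec_apply] using congrFun (congrFun hA i) j

end Matrix

/-- `backwardProd W k = W k * ⋯ * W 1`; the factor `W 0` does not occur. -/
def backwardProd {M : Type*} [Monoid M] (W : ℕ → M) (k : ℕ) : M :=
  (List.range k).foldl (fun P m => W (m + 1) * P) 1

section backwardProd

variable {M : Type*} [Monoid M] (W : ℕ → M)

@[simp]
theorem backwardProd_zero : backwardProd W 0 = 1 := rfl

theorem backwardProd_succ (k : ℕ) : backwardProd W (k + 1) = W (k + 1) * backwardProd W k := by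
  simp [backwardProd, List.range_succ]

theorem backwardProd_mem {S : Submonoid M} (hW : ∀ k, W (k + 1) ∈ S) (k : ℕ) :
    backwardProd W k ∈ S := by
  induction k with
  | zero => exact S.one_mem
  | succ k ih => rw [backwardProd_succ]; exact S.mul_mem (hW k) ih

end backwardProd

theorem ProbabilityTheory.iIndepFun.indepFun_of_measurable_iSup_Iic {Ω ι β γ : Type*}
    {mΩ : MeasurableSpace Ω} {μ : Measure Ω} [LinearOrder ι] [mβ : MeasurableSpace β]
    [MeasurableSpace γ] {f : ι → Ω → β} (hf : ∀ i, Measurable (f i)) (hfi : iIndepFun f μ)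
    {i j : ι} (hij : i < j) {g : Ω → γ}
    (hg : Measurable[⨆ k ∈ Set.Iic i, MeasurableSpace.comap (f k) mβ] g) :
    IndepFun (f j) g μ := by
  have h := indep_iSup_of_disjoint (fun k => (hf k).comap_le) ((iIndepFun_iff_iIndep _ _ _).1 hfi)
    (S := {j}) (T := Set.Iic i) (by simpa using hij)
  rw [iSup_singleton] at h
  exact (IndepFun_iff_Indep _ _ _).2 (indep_of_indep_of_le_right h hg.comap_le)

section RandomProducts

variable {Ω M : Type*} {mΩ : MeasurableSpace Ω} [Monoid M] [mM : MeasurableSpace M]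
  [MeasurableMul₂ M] {W : ℕ → Ω → M}

theorem measurable_backwardProd_iSup_Iic (k : ℕ) :
    Measurable[⨆ i ∈ Set.Iic k, MeasurableSpace.comap (W i) mM]
      fun ω => backwardProd (W · ω) k := by
  induction k with
  | zero => simp
  | succ k ih =>
    simp only [backwardProd_succ]
    refine Measurable.mul ?_ (ih.mono (biSup_mono fun i hi => ?_) le_rfl)
    · exact (comap_measurable (W (k + 1))).mono
        (le_iSup₂ (f := fun i (_ : i ∈ Set.Iic (k + 1)) => MeasurableSpace.comap (W i) mM)
          (k + 1) Set.self_mem_Iic) le_rfl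
    · exact Set.mem_Iic.2 (Nat.le_succ_of_le hi)

theorem measurable_backwardProd (hW : ∀ k, Measurable (W k)) (k : ℕ) :
    Measurable fun ω => backwardProd (W · ω) k :=
  (measurable_backwardProd_iSup_Iic k).mono (iSup₂_le fun i _ => (hW i).comap_le) le_rfl

end RandomProducts

-- `Matrix` is a type synonym, so instance search does not find these through the Pi instances.
instance {n : ℕ} : BorelSpace (Matrix (Fin n) (Fin n) ℝ) :=
  inferInstanceAs (BorelSpace (Fin n → Fin n → ℝ))

instance {n : ℕ} : SecondCountableTopology (Matrix (Fin n) (Fin n) ℝ) :=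
  inferInstanceAs (SecondCountableTopology (Fin n → Fin n → ℝ))

section RandomStochasticMatrices

variable {Ω : Type*} {mΩ : MeasurableSpace Ω} {μ : Measure Ω} {n : ℕ}

theorem integrable_apply_of_ae_mem_rowStochastic [IsFiniteMeasure μ]
    {M : Ω → Matrix (Fin n) (Fin n) ℝ} (hM : Measurable M)
    (hst : ∀ᵐ ω ∂μ, M ω ∈ rowStochastic ℝ (Fin n)) (i j : Fin n) :
    Integrable (fun ω => M ω i j) μ :=
  .of_bound (by fun_prop) 1 (hst.mono fun _ h => norm_apply_le_one_of_mem_rowStochastic h i j)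

theorem integral_backwardProd_apply [IsProbabilityMeasure μ]
    {W : ℕ → Ω → Matrix (Fin n) (Fin n) ℝ}
    (hmeas : ∀ k, Measurable (W k)) (hindep : iIndepFun W μ)
    (hst : ∀ k, ∀ᵐ ω ∂μ, W k ω ∈ rowStochastic ℝ (Fin n)) {A : Matrix (Fin n) (Fin n) ℝ}
    (hA : ∀ k i j, ∫ ω, W (k + 1) ω i j ∂μ = A i j) (k : ℕ) (i j : Fin n) :
    ∫ ω, backwardProd (W · ω) k i j ∂μ = (A ^ k) i j := by
  induction k generalizing i j with
  | zero => simp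
  | succ k ih =>
    set P := fun ω => backwardProd (W · ω) k
    have hP : Measurable P := measurable_backwardProd hmeas k
    have hPst : ∀ᵐ ω ∂μ, P ω ∈ rowStochastic ℝ (Fin n) :=
      (ae_all_iff.2 hst).mono fun ω h => backwardProd_mem _ (fun m => h (m + 1)) k
    have hindep_entry : ∀ l, IndepFun (fun ω => W (k + 1) ω i l) (fun ω => P ω l j) μ := fun l =>
      (hindep.indepFun_of_measurable_iSup_Iic hmeas (Nat.lt_succ_self k)
        (measurable_backwardProd_iSup_Iic k)).comp
          (φ := fun M : Matrix (Fin n) (Fin n) ℝ => M i l)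
          (ψ := fun M : Matrix (Fin n) (Fin n) ℝ => M l j) (by fun_prop) (by fun_prop)
    have hWint := integrable_apply_of_ae_mem_rowStochastic (hmeas (k + 1)) (hst (k + 1)) i
    have hPint := integrable_apply_of_ae_mem_rowStochastic hP hPst
    calc ∫ ω, backwardProd (W · ω) (k + 1) i j ∂μ = ∫ ω, ∑ l, W (k + 1) ω i l * P ω l j ∂μ := by
          simp only [backwardProd_succ, mul_apply, P]
      _ = ∑ l, A i l * (A ^ k) l j := by
          refine (integral_finsetSum _ fun l _ => ?_).trans (Finset.sum_congr rfl fun l _ => ?_)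
          · exact (hindep_entry l).integrable_mul (hWint l) (hPint l j)
          rw [← hA k, ← ih]
          exact (hindep_entry l).integral_mul_eq_mul_integral (hWint l).1 (hPint l j).1
      _ = (A ^ (k + 1)) i j := by rw [pow_succ', mul_apply]

theorem tendsto_integral_apply_of_ae_tendsto [IsFiniteMeasure μ]
    {M : ℕ → Ω → Matrix (Fin n) (Fin n) ℝ} {L : Ω → Matrix (Fin n) (Fin n) ℝ}
    (hM : ∀ k, Measurable (M k)) (hst : ∀ k, ∀ᵐ ω ∂μ, M k ω ∈ rowStochastic ℝ (Fin n))
    (hL : ∀ᵐ ω ∂μ, Tendsto (M · ω) atTop (𝓝 (L ω))) (i j : Fin n) :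
    Tendsto (fun k => ∫ ω, M k ω i j ∂μ) atTop (𝓝 (∫ ω, L ω i j ∂μ)) :=
  tendsto_integral_of_dominated_convergence (fun _ => 1)
    (fun k => (by fun_prop : Measurable fun ω => M k ω i j).aestronglyMeasurable)
    (integrable_const 1)
    (fun k => (hst k).mono fun _ h => norm_apply_le_one_of_mem_rowStochastic h i j)
    (hL.mono fun _ h => tendsto_pi_nhds.1 (tendsto_pi_nhds.1 h i) j)

theorem integrable_apply_of_ae_tendsto_vecMulVec [IsFiniteMeasure μ]
    {M : ℕ → Ω → Matrix (Fin n) (Fin n) ℝ} {d : Ω → Fin n → ℝ} (hM : ∀ k, Measurable (M k))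
    (hd : ∀ᵐ ω ∂μ, d ω ∈ stdSimplex ℝ (Fin n))
    (hL : ∀ᵐ ω ∂μ, Tendsto (M · ω) atTop (𝓝 (vecMulVec 1 (d ω)))) (j : Fin n) :
    Integrable (fun ω => d ω j) μ := by
  have hd_meas : AEMeasurable (fun ω => d ω j) μ :=
    aemeasurable_of_tendsto_metrizable_ae' (fun k => (by fun_prop : Measurable fun ω =>
      M k ω j j).aemeasurable) (hL.mono fun _ h => tendsto_apply_of_tendsto_vecMulVec h j j)
  refine .of_bound hd_meas.aestronglyMeasurable 1 (hd.mono fun _ h => ?_)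
  rw [Real.norm_of_nonneg (h.1 j)]
  exact (mem_Icc_of_mem_stdSimplex h j).2

end RandomStochasticMatrices

/-- For an i.i.d. sequence of random row-stochastic matrices whose backward products
`W_k ⋯ W_1` converge a.s. to `1 dᵀ` for a random probability vector `d`, the a.s. limit
`x* = dᵀ x(0)` of the consensus dynamics satisfies `E[x*] = x(0)ᵀ v₁`, where `v₁` is the
normalized left eigenvector of `E[W]` for the (simple) unit eigenvalue. -/
theorem mean_of_asymptotic_consensus_value
    {Ω : Type*} [MeasurableSpace Ω] (μ : Measure Ω) [IsProbabilityMeasure μ]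
    {n : ℕ} (hn : 0 < n)
    (W : ℕ → Ω → Matrix (Fin n) (Fin n) ℝ)
    (hmeas : ∀ k, Measurable (W k))
    (hindep : iIndepFun W μ)
    (hident : ∀ k, Measure.map (W k) μ = Measure.map (W 0) μ)
    (hstoch : ∀ k, ∀ᵐ ω ∂μ, (∀ i j, 0 ≤ W k ω i j) ∧
        W k ω *ᵥ (fun _ => (1 : ℝ)) = fun _ => (1 : ℝ))
    (d : Ω → Fin n → ℝ)
    (hconv : ∀ᵐ ω ∂μ,
        Tendsto (fun k => (List.range k).foldl (fun P m => W (m + 1) ω * P) 1)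
          atTop (nhds (Matrix.vecMulVec (fun _ => (1 : ℝ)) (d ω))))
    (EW : Matrix (Fin n) (Fin n) ℝ) (hEW : ∀ i j, EW i j = ∫ ω, W 0 ω i j ∂μ)
    (hsimple : Polynomial.rootMultiplicity (1 : ℝ) EW.charpoly = 1)
    (v : Fin n → ℝ) (hv : v ᵥ* EW = v) (hv1 : ∑ i, v i = 1)
    (x0 : Fin n → ℝ) :
    ∫ ω, (∑ i, d ω i * x0 i) ∂μ = ∑ i, x0 i * v i := by
  have : Nonempty (Fin n) := ⟨⟨0, hn⟩⟩
  have hconv : ∀ᵐ ω ∂μ, Tendsto (backwardProd (W · ω)) atTop (𝓝 (vecMulVec 1 (d ω))) := hconv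
  have hWst : ∀ k, ∀ᵐ ω ∂μ, W k ω ∈ rowStochastic ℝ (Fin n) := fun k =>
    (hstoch k).mono fun _ h => mem_rowStochastic.2 h
  have hPst : ∀ k, ∀ᵐ ω ∂μ, backwardProd (W · ω) k ∈ rowStochastic ℝ (Fin n) := fun k =>
    (ae_all_iff.2 hWst).mono fun _ h => backwardProd_mem _ (fun m => h (m + 1)) k
  have hd : ∀ᵐ ω ∂μ, d ω ∈ stdSimplex ℝ (Fin n) :=
    ((ae_all_iff.2 hPst).and hconv).mono fun _ h => mem_stdSimplex_of_tendsto_vecMulVec h.1 h.2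
  have hd_int : ∀ j, Integrable (fun ω => d ω j) μ :=
    integrable_apply_of_ae_tendsto_vecMulVec (measurable_backwardProd hmeas) hd hconv
  have hWA : ∀ k i j, ∫ ω, W (k + 1) ω i j ∂μ = EW i j := fun k i j => by
    rw [hEW]
    exact (IdentDistrib.comp ⟨(hmeas _).aemeasurable, (hmeas 0).aemeasurable, hident _⟩
      (by fun_prop : Measurable fun M : Matrix (Fin n) (Fin n) ℝ => M i j)).integral_eq
  have hlim : Tendsto (EW ^ ·) atTop (𝓝 (vecMulVec 1 fun j => ∫ ω, d ω j ∂μ)) := by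
    refine tendsto_pi_nhds.2 fun i => tendsto_pi_nhds.2 fun j => ?_
    simpa [← integral_backwardProd_apply hmeas hindep hWst hWA, vecMulVec_apply] using
      tendsto_integral_apply_of_ae_tendsto (measurable_backwardProd hmeas) hPst hconv i j
  have hsum : ∑ j, ∫ ω, d ω j ∂μ = 1 := by
    rw [← integral_finsetSum _ fun j _ => hd_int j, integral_congr_ae (hd.mono fun _ h => h.2)]
    simp
  have hv_eq := eq_of_vecMul_eq_self_of_rootMultiplicity_le_one hsimple.le hv
    (vecMul_eq_self_of_tendsto_pow hlim) hv1 hsum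
  rw [integral_finsetSum _ fun i _ => (hd_int i).mul_const _, ← hv_eq]
  simp [integral_mul_const, mul_comm]
end

section
/- Let a, b ∈ {0,1} be independent Bernoulli(p) random variables, Y ~ Binomial(d-2, p) independent of (a,b), d ≥ 2, and set X = a + b + Y. Then E[ab/(X+1)²] = (1 + 2M⁽²⁾ - 3M⁽¹⁾)/(d(d-1)), where M⁽¹⁾ = E[1/(X+1)] and M⁽²⁾ = E[1/(X+1)²] for X ~ Binomial(d,p). -/
/-!
Only the outcome `a = b = 1` contributes, so the left side is `p² E[1/(Y+3)²]`. Absorbing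
`p²` and the factor `d(d-1)` into the binomial weights via
`d(d-1) C(d-2,k) = (k+2)(k+1) C(d,k+2)` turns it into `E[X(X-1)/(X+1)²]` for
`X ~ Binomial(d,p)`, and `X(X-1)/(X+1)² = 1 - 3/(X+1) + 2/(X+1)²`.
-/

open Finset

theorem Nat.add_two_mul_add_one_mul_choose_eq (n k : ℕ) :
    (n + 2) * (n + 1) * n.choose k = (n + 2).choose (k + 2) * (k + 2) * (k + 1) := by
  rw [mul_assoc, add_one_mul_choose_eq, ← mul_assoc, add_one_mul_choose_eq]

/-- `E[f X]` for `X ~ Binomial(n, p)`, written with `q` in place of `1 - p`. -/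
def binomialSum {R : Type*} [CommSemiring R] (n : ℕ) (p q : R) (f : ℕ → R) : R :=
  ∑ k ∈ range (n + 1), f k * n.choose k * p ^ k * q ^ (n - k)

section binomialSum

variable {R : Type*}

theorem binomialSum_one [CommSemiring R] (n : ℕ) {p q : R} (hpq : p + q = 1) :
    binomialSum n p q (fun _ => 1) = 1 := by
  calc binomialSum n p q (fun _ => 1) = (p + q) ^ n := by
        rw [binomialSum, add_pow]
        exact sum_congr rfl fun k _ => by ring
    _ = 1 := by rw [hpq, one_pow]

theorem binomialSum_mul_mul_sub_one [CommRing R] (n : ℕ) (p q : R) (w : ℕ → R) :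
    binomialSum (n + 2) p q (fun j => (j : R) * ((j : R) - 1) * w j) =
      ((n : R) + 2) * ((n : R) + 1) * (p ^ 2 * binomialSum n p q (fun k => w (k + 2))) := by
  rw [binomialSum, sum_range_succ', sum_range_succ', binomialSum, mul_sum, mul_sum]
  simp only [Nat.cast_zero, zero_mul, zero_add, Nat.cast_one, sub_self, mul_zero, add_zero]
  refine sum_congr rfl fun k _ => ?_
  have hchoose : ((n : R) + 2) * ((n : R) + 1) * n.choose k =
      (n + 2).choose (k + 2) * ((k : R) + 2) * ((k : R) + 1) := by
    exact_mod_cast congrArg (Nat.cast (R := R)) (Nat.add_two_mul_add_one_mul_choose_eq n k)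
  rw [show n + 2 - (k + 1 + 1) = n - k by omega]
  push_cast
  linear_combination -(w (k + 2) * p ^ (k + 2) * q ^ (n - k) * hchoose)

theorem binomialSum_mul_sub_one_div_sq [Field R] [CharZero R] (n : ℕ) {p q : R}
    (hpq : p + q = 1) :
    binomialSum n p q (fun j => (j : R) * ((j : R) - 1) * (1 / ((j : R) + 1) ^ 2)) =
      1 + 2 * binomialSum n p q (fun j => 1 / ((j : R) + 1) ^ 2) -
        3 * binomialSum n p q (fun j => 1 / ((j : R) + 1)) := by
  suffices binomialSum n p q (fun j => (j : R) * ((j : R) - 1) * (1 / ((j : R) + 1) ^ 2)) =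
      binomialSum n p q (fun _ => 1) + 2 * binomialSum n p q (fun j => 1 / ((j : R) + 1) ^ 2) -
        3 * binomialSum n p q (fun j => 1 / ((j : R) + 1)) by
    rwa [binomialSum_one n hpq] at this
  simp only [binomialSum, mul_sum, ← sum_add_distrib, ← sum_sub_distrib]
  refine sum_congr rfl fun j _ => ?_
  have hj : (j : R) + 1 ≠ 0 := Nat.cast_add_one_ne_zero j
  field_simp
  ring

end binomialSum

theorem bernoulli_pair_binomial_expectation_general
    (d : ℕ) (hd : 2 ≤ d) (p q M1 M2 : ℝ) (hq : q = 1 - p)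
    (hM1 : M1 = ∑ k ∈ Finset.range (d + 1),
        (1 / ((k : ℝ) + 1)) * (d.choose k : ℝ) * p ^ k * q ^ (d - k))
    (hM2 : M2 = ∑ k ∈ Finset.range (d + 1),
        (1 / ((k : ℝ) + 1) ^ 2) * (d.choose k : ℝ) * p ^ k * q ^ (d - k)) :
    ∑ a ∈ Finset.range 2, ∑ b ∈ Finset.range 2, ∑ k ∈ Finset.range (d - 1),
        (((a : ℝ) * (b : ℝ)) / ((a : ℝ) + (b : ℝ) + (k : ℝ) + 1) ^ 2) *
          (p ^ a * q ^ (1 - a)) * (p ^ b * q ^ (1 - b)) *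
          (((d - 2).choose k : ℝ) * p ^ k * q ^ (d - 2 - k))
      = (1 + 2 * M2 - 3 * M1) / ((d : ℝ) * ((d : ℝ) - 1)) := by
  obtain ⟨n, rfl⟩ : ∃ n, d = n + 2 := ⟨d - 2, by omega⟩
  have hpq : p + q = 1 := by rw [hq]; ring
  have hpair : ∑ a ∈ range 2, ∑ b ∈ range 2, ∑ k ∈ range (n + 1),
        (((a : ℝ) * (b : ℝ)) / ((a : ℝ) + (b : ℝ) + (k : ℝ) + 1) ^ 2) *
          (p ^ a * q ^ (1 - a)) * (p ^ b * q ^ (1 - b)) * ((n.choose k : ℝ) * p ^ k * q ^ (n - k)) =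
      p ^ 2 * binomialSum n p q (fun k => 1 / (((k + 2 : ℕ) : ℝ) + 1) ^ 2) := by
    rw [show range 2 = {0, 1} by rfl]
    simp only [mem_singleton, zero_ne_one, not_false_eq_true, sum_insert, sum_singleton,
      CharP.cast_eq_zero, Nat.cast_one, mul_zero, add_zero, zero_div, zero_mul, pow_zero,
      tsub_zero, pow_one, one_mul, sum_const_zero, mul_one, tsub_self, zero_add, binomialSum,
      mul_sum]
    refine sum_congr rfl fun k _ => ?_
    push_cast
    ring
  simp only [show n + 2 - 1 = n + 1 by omega, Nat.add_sub_cancel]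
  rw [hpair, hM1, hM2, Nat.cast_add, Nat.cast_ofNat, show (n : ℝ) + 2 - 1 = n + 1 by ring,
    eq_div_iff (by positivity), mul_comm]
  exact (binomialSum_mul_mul_sub_one n p q _).symm.trans (binomialSum_mul_sub_one_div_sq _ hpq)

/-- For independent `a, b ~ Bernoulli(p)` and `Y ~ Binomial(d-2,p)` independent of `(a,b)`,
with `X = a + b + Y ~ Binomial(d,p)` and `d ≥ 2`,
`E[ab/(X+1)²] = (1 + 2M⁽²⁾ - 3M⁽¹⁾)/(d(d-1))`, where `M⁽¹⁾ = E[1/(X+1)]` and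
`M⁽²⁾ = E[1/(X+1)²]` for `X ~ Binomial(d,p)`. -/
theorem bernoulli_pair_binomial_expectation
    (d : ℕ) (hd : 2 ≤ d) (p q M1 M2 : ℝ) (hp0 : 0 < p) (hp1 : p < 1) (hq : q = 1 - p)
    (hM1 : M1 = ∑ k ∈ Finset.range (d + 1),
        (1 / ((k : ℝ) + 1)) * (d.choose k : ℝ) * p ^ k * q ^ (d - k))
    (hM2 : M2 = ∑ k ∈ Finset.range (d + 1),
        (1 / ((k : ℝ) + 1) ^ 2) * (d.choose k : ℝ) * p ^ k * q ^ (d - k)) :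
    ∑ a ∈ Finset.range 2, ∑ b ∈ Finset.range 2, ∑ k ∈ Finset.range (d - 1),
        (((a : ℝ) * (b : ℝ)) / ((a : ℝ) + (b : ℝ) + (k : ℝ) + 1) ^ 2) *
          (p ^ a * q ^ (1 - a)) * (p ^ b * q ^ (1 - b)) *
          (((d - 2).choose k : ℝ) * p ^ k * q ^ (d - 2 - k))
      = (1 + 2 * M2 - 3 * M1) / ((d : ℝ) * ((d : ℝ) - 1)) :=
  bernoulli_pair_binomial_expectation_general d hd p q M1 M2 hq hM1 hM2
end
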